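/- Equip R = 𝔽₂[c] with the ℤ-grading in which c is homogeneous of degree 2, and equip A with the ℤ-grading in which c^k·1 has degree 2k + 1 and c^k·X has degree 2k − 1. Then the multiplication m : A ⊗_R A → A is homogeneous of degree −1, the comultiplication Δ : A → A ⊗_R A is homogeneous of degree −1, the unit R → A, 1 ↦ 1, is homogeneous of degree +1, and the counit ε : A → R is homogeneous of degree +1. -/
import Mathlib


open TensorProduct

set_option synthInstance.maxHeartbeats 1000000
set_option maxHeartbeats 1000000

noncomputable section

/-- The ground ring `R = 𝔽₂[c]`. -/
abbrev R2 : Type := Polynomial (ZMod 2)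

/-- The indeterminate `c ∈ 𝔽₂[c]`. -/
def cR : R2 := Polynomial.X

/-- Khovanov's algebra `A = R[X]/(X²)`, realized as dual numbers over `R`. -/
abbrev A : Type := DualNumber R2

/-- The generator `X ∈ A` with `X² = 0`. -/
def Xv : A := DualNumber.eps

/-- The degree-`d` homogeneous component of `R = 𝔽₂[c]`, where `c` is
homogeneous of degree `2`: the `𝔽₂`-span of the powers `c^k` with `2k = d`. -/
def Rdeg (d : ℤ) : Submodule (ZMod 2) R2 :=
  Submodule.span (ZMod 2) {r : R2 | ∃ k : ℕ, r = cR ^ k ∧ 2 * (k : ℤ) = d}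

/-- The degree-`n` homogeneous component of `A`: the `𝔽₂`-span of the
elements `c^k·1` of degree `2k + 1` and `c^k·X` of degree `2k - 1`. -/
def Adeg (n : ℤ) : Submodule (ZMod 2) A :=
  Submodule.span (ZMod 2)
    {a : A | ∃ k : ℕ,
      (a = (cR ^ k : R2) • (1 : A) ∧ 2 * (k : ℤ) + 1 = n) ∨
      (a = (cR ^ k : R2) • Xv ∧ 2 * (k : ℤ) - 1 = n)}

/-- The degree-`n` homogeneous component of `A ⊗[R] A`: the `𝔽₂`-span of pure
tensors of homogeneous elements whose degrees add up to `n`. -/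
def Tdeg (n : ℤ) : Submodule (ZMod 2) (A ⊗[R2] A) :=
  Submodule.span (ZMod 2)
    {t : A ⊗[R2] A | ∃ p q : ℤ, ∃ x ∈ Adeg p, ∃ y ∈ Adeg q,
      t = x ⊗ₜ[R2] y ∧ p + q = n}

lemma mem_Adeg_one (k : ℕ) (n : ℤ) (h : 2 * (k : ℤ) + 1 = n) :
    (cR ^ k : R2) • (1 : A) ∈ Adeg n :=
  Submodule.subset_span ⟨k, Or.inl ⟨rfl, h⟩⟩

lemma mem_Adeg_X (k : ℕ) (n : ℤ) (h : 2 * (k : ℤ) - 1 = n) :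
    (cR ^ k : R2) • Xv ∈ Adeg n :=
  Submodule.subset_span ⟨k, Or.inr ⟨rfl, h⟩⟩

lemma one_mem_Adeg : (1 : A) ∈ Adeg 1 := by
  simpa using mem_Adeg_one 0 1 (by norm_num)

lemma X_mem_Adeg : Xv ∈ Adeg (-1) := by
  simpa using mem_Adeg_X 0 (-1) (by norm_num)

lemma mem_Rdeg (k : ℕ) (d : ℤ) (h : 2 * (k : ℤ) = d) :
    (cR ^ k : R2) ∈ Rdeg d :=
  Submodule.subset_span ⟨k, rfl, h⟩

lemma mem_Tdeg {p q n : ℤ} {x y : A} (hx : x ∈ Adeg p) (hy : y ∈ Adeg q)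
    (h : p + q = n) : x ⊗ₜ[R2] y ∈ Tdeg n :=
  Submodule.subset_span ⟨p, q, x, hx, y, hy, rfl, h⟩

/-- With `deg c = 2`, `deg(c^k·1) = 2k + 1` and `deg(c^k·X) = 2k − 1`, the
multiplication `m` is homogeneous of degree `−1`, the comultiplication `Δ`
(with `Δ(1) = 1⊗X + X⊗1 + c·X⊗X`, `Δ(X) = X⊗X`) is homogeneous of degree
`−1`, the unit `R → A` is homogeneous of degree `+1`, and the counit `ε`
(with `ε(1) = c`, `ε(X) = 1`) is homogeneous of degree `+1`. -/
theorem graded_structure (Δ : A →ₗ[R2] A ⊗[R2] A)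
    (hΔ1 : Δ 1 = (1 : A) ⊗ₜ[R2] Xv + Xv ⊗ₜ[R2] (1 : A) + cR • (Xv ⊗ₜ[R2] Xv))
    (hΔX : Δ Xv = Xv ⊗ₜ[R2] Xv)
    (ε : A →ₗ[R2] R2) (hε1 : ε 1 = cR) (hεX : ε Xv = 1) :
    -- multiplication has degree −1
    (∀ p q : ℤ, ∀ a ∈ Adeg p, ∀ b ∈ Adeg q, a * b ∈ Adeg (p + q - 1))
    -- comultiplication has degree −1
    ∧ (∀ n : ℤ, ∀ a ∈ Adeg n, Δ a ∈ Tdeg (n - 1))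
    -- the unit has degree +1
    ∧ (∀ d : ℤ, ∀ r ∈ Rdeg d, algebraMap R2 A r ∈ Adeg (d + 1))
    -- the counit has degree +1
    ∧ (∀ n : ℤ, ∀ a ∈ Adeg n, ε a ∈ Rdeg (n + 1)) := by

  refine ⟨?_, ?_, ?_, ?_⟩
  · -- multiplication
    intro p q a ha b hb
    induction ha using Submodule.span_induction with
    | mem a ha =>
      induction hb using Submodule.span_induction with
      | mem b hb =>
        obtain ⟨k, hk⟩ := ha
        obtain ⟨l, hl⟩ := hb
        rcases hk with ⟨rfl, hk⟩ | ⟨rfl, hk⟩ <;> rcases hl with ⟨rfl, hl⟩ | ⟨rfl, hl⟩ <;>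
          rw [smul_mul_smul_comm, ← pow_add]
        · rw [mul_one]
          exact mem_Adeg_one (k + l) _ (by push_cast; omega)
        · rw [one_mul]
          exact mem_Adeg_X (k + l) _ (by push_cast; omega)
        · rw [mul_one]
          exact mem_Adeg_X (k + l) _ (by push_cast; omega)
        · rw [show Xv * Xv = 0 from DualNumber.eps_mul_eps, smul_zero]
          exact Submodule.zero_mem _
      | zero => rw [mul_zero]; exact Submodule.zero_mem _
      | add x y _ _ hx hy => rw [mul_add]; exact Submodule.add_mem _ hx hy
      | smul z x _ hx => rw [mul_smul_comm]; exact Submodule.smul_mem _ z hx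
    | zero => rw [zero_mul]; exact Submodule.zero_mem _
    | add x y _ _ hx hy => rw [add_mul]; exact Submodule.add_mem _ hx hy
    | smul z x _ hx => rw [smul_mul_assoc]; exact Submodule.smul_mem _ z hx
  · -- comultiplication
    intro n a ha
    induction ha using Submodule.span_induction with
    | mem a ha =>
      obtain ⟨k, ⟨rfl, hk⟩ | ⟨rfl, hk⟩⟩ := ha
      · rw [map_smul, hΔ1, smul_add, smul_add, smul_smul, ← pow_succ,
          TensorProduct.smul_tmul', TensorProduct.smul_tmul', TensorProduct.smul_tmul']
        refine Submodule.add_mem _ (Submodule.add_mem _ ?_ ?_) ?_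
        · exact mem_Tdeg (mem_Adeg_one k _ rfl) X_mem_Adeg (by omega)
        · exact mem_Tdeg (mem_Adeg_X k _ rfl) one_mem_Adeg (by omega)
        · exact mem_Tdeg (mem_Adeg_X (k + 1) _ rfl) X_mem_Adeg
            (by push_cast; omega)
      · rw [map_smul, hΔX, TensorProduct.smul_tmul']
        exact mem_Tdeg (mem_Adeg_X k _ rfl) X_mem_Adeg (by omega)
    | zero => rw [map_zero]; exact Submodule.zero_mem _
    | add x y _ _ hx hy => rw [map_add]; exact Submodule.add_mem _ hx hy
    | smul z x _ hx => rw [Δ.map_smul_of_tower]; exact Submodule.smul_mem _ z hx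
  · -- unit
    intro d r hr
    induction hr using Submodule.span_induction with
    | mem r hr =>
      obtain ⟨k, rfl, hk⟩ := hr
      rw [Algebra.algebraMap_eq_smul_one]
      exact mem_Adeg_one k _ (by omega)
    | zero => rw [map_zero]; exact Submodule.zero_mem _
    | add x y _ _ hx hy => rw [map_add]; exact Submodule.add_mem _ hx hy
    | smul z x _ hx =>
      have h : (algebraMap R2 A) (z • x) = z • algebraMap R2 A x :=
        map_smul ((Algebra.linearMap R2 A).restrictScalars (ZMod 2)) z x
      rw [h]
      exact Submodule.smul_mem _ z hx
  · -- counit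
    intro n a ha
    induction ha using Submodule.span_induction with
    | mem a ha =>
      obtain ⟨k, ⟨rfl, hk⟩ | ⟨rfl, hk⟩⟩ := ha
      · rw [map_smul, hε1, smul_eq_mul, ← pow_succ]
        exact mem_Rdeg (k + 1) _ (by push_cast; omega)
      · rw [map_smul, hεX, smul_eq_mul, mul_one]
        exact mem_Rdeg k _ (by omega)
    | zero => rw [map_zero]; exact Submodule.zero_mem _
    | add x y _ _ hx hy => rw [map_add]; exact Submodule.add_mem _ hx hy
    | smul z x _ hx => rw [ε.map_smul_of_tower]; exact Submodule.smul_mem _ z hx
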